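/- Let A¹ and A² be nonempty finite sets, R¹ ∈ ℝ^{A¹×A²}, R² ∈ ℝ^{A²×A¹}, τ¹, τ² ≥ 0, and λ > 1. Define c := λ·‖R¹ + (R²)ᵀ‖_max − ( val̄¹(R¹) + val̄²(R²) ). Then c ≥ (λ − 1)·‖R¹ + (R²)ᵀ‖_max ≥ 0, and c = 0 if and only if ‖R¹ + (R²)ᵀ‖_max = 0 (i.e., if and only if the game is zero-sum). -/

import Mathlib

open Finset

noncomputable instance stdSimplexNonempty {A : Type*} [Fintype A] [Nonempty A] :
    Nonempty (stdSimplex ℝ A) := by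
  classical
  exact ⟨⟨Pi.single (Classical.arbitrary A) 1, single_mem_stdSimplex ℝ _⟩⟩

/-- Expected payoff `μᵀ R ν` of the matrix game `R` under mixed strategies `μ, ν`. -/
noncomputable def pay {A B : Type*} [Fintype A] [Fintype B]
    (R : A → B → ℝ) (μ : A → ℝ) (ν : B → ℝ) : ℝ :=
  ∑ a, ∑ b, μ a * R a b * ν b

/-- Shannon entropy `H(μ) = -∑ μ(a) log μ(a)` (note `Real.log 0 = 0` in Mathlib). -/
noncomputable def entropy {A : Type*} [Fintype A] (μ : A → ℝ) : ℝ :=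
  -∑ a, μ a * Real.log (μ a)

/-- The zero-sum matrix-game value `val(R) = max_{μ∈Δ(A)} min_{ν∈Δ(B)} μᵀ R ν`. -/
noncomputable def matVal {A B : Type*} [Fintype A] [Fintype B] [Nonempty A] [Nonempty B]
    (R : A → B → ℝ) : ℝ :=
  ⨆ μ : stdSimplex ℝ A, ⨅ ν : stdSimplex ℝ B, pay R μ.1 ν.1

/-- The entropy-regularized value
`val̄(R) = max_{μ∈Δ(A)} min_{ν∈Δ(B)} { μᵀ R ν + τ₁ H(μ) - τ₂ H(ν) }`. -/
noncomputable def regVal {A B : Type*} [Fintype A] [Fintype B] [Nonempty A] [Nonempty B]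
    (τ1 τ2 : ℝ) (R : A → B → ℝ) : ℝ :=
  ⨆ μ : stdSimplex ℝ A, ⨅ ν : stdSimplex ℝ B,
    pay R μ.1 ν.1 + τ1 * entropy μ.1 - τ2 * entropy ν.1

/-- Softmax (smoothed best response) with temperature `τ`. -/
noncomputable def softmax {A : Type*} [Fintype A] (τ : ℝ) (q : A → ℝ) : A → ℝ :=
  fun a => Real.exp (q a / τ) / ∑ b, Real.exp (q b / τ)

/-- Maximum norm of a matrix: the maximum of the absolute values of its entries. -/
noncomputable def matMaxNorm {A B : Type*} [Fintype A] [Fintype B] [Nonempty A] [Nonempty B]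
    (M : A → B → ℝ) : ℝ :=
  (Finset.univ (α := A × B)).sup' univ_nonempty (fun ab => |M ab.1 ab.2|)

/-- Sup norm of a vector. -/
noncomputable def vecSupNorm {A : Type*} [Fintype A] [Nonempty A] (q : A → ℝ) : ℝ :=
  Finset.univ.sup' univ_nonempty (fun a => |q a|)


/-!
The entropy terms of the two regularized payoffs cancel in their sum, which is the payoff
`μᵀ(R¹ + (R²)ᵀ)ν ≤ ‖R¹ + (R²)ᵀ‖_max`. Hence `val̄¹(R¹) + val̄²(R²) ≤ ‖R¹ + (R²)ᵀ‖_max` (weak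
duality), i.e. `c ≥ (λ - 1)‖R¹ + (R²)ᵀ‖_max`, and `c = 0` forces the norm to vanish.
Conversely, in a zero-sum game the second regularized payoff is minus the first,
`F(μ, ν) = μᵀR¹ν + τ¹H(μ) - τ²H(ν)`, which is continuous, concave in `μ` and convex in `ν`.
Sion's minimax theorem gives `F` a saddle point `(a, b)` on the product of simplices; then
`val̄¹(R¹) ≥ F(a, b)` and `val̄²(R²) ≥ -F(a, b)`, so the two values add up to `0` and `c = 0`.
-/

open Set

theorem ciSup_ciInf_add_ciSup_ciInf_le {ι κ : Type*} [Nonempty ι] [Nonempty κ]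
    {f : ι → κ → ℝ} {g : κ → ι → ℝ} (hf : ∀ i, BddBelow (range (f i)))
    (hg : ∀ j, BddBelow (range (g j))) {N : ℝ} (h : ∀ i j, f i j + g j i ≤ N) :
    (⨆ i, ⨅ j, f i j) + ⨆ j, ⨅ i, g j i ≤ N := by
  rw [← le_sub_iff_add_le']
  refine ciSup_le fun j => ?_
  rw [le_sub_comm]
  refine ciSup_le fun i => ?_
  linarith [ciInf_le (hf i) j, ciInf_le (hg j) i, h i j]

theorem le_ciSup_ciInf_of_saddle {ι κ : Type*} [Nonempty κ] {f : ι → κ → ℝ}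
    (hf : ∀ i, BddBelow (range (f i))) {i₀ : ι} {j₀ : κ} (h : ∀ i j, f i j₀ ≤ f i₀ j) :
    f i₀ j₀ ≤ ⨆ i, ⨅ j, f i j :=
  le_ciSup_of_le ⟨f i₀ j₀, forall_mem_range.2 fun i => (ciInf_le (hf i) j₀).trans (h i j₀)⟩
    i₀ (le_ciInf fun j => h i₀ j)

section Game

variable {A B : Type*} [Fintype A] [Fintype B]

noncomputable def payBilin (R : A → B → ℝ) : (A → ℝ) →ₗ[ℝ] (B → ℝ) →ₗ[ℝ] ℝ :=
  LinearMap.mk₂ ℝ (pay R)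
    (fun _ _ _ => by simp only [pay, Pi.add_apply, add_mul, Finset.sum_add_distrib])
    (fun _ _ _ => by simp only [pay, Pi.smul_apply, smul_eq_mul, Finset.mul_sum, mul_assoc])
    (fun _ _ _ => by simp only [pay, Pi.add_apply, mul_add, Finset.sum_add_distrib])
    (fun _ _ _ => by
      simp only [pay, Pi.smul_apply, smul_eq_mul, Finset.mul_sum]
      exact Finset.sum_congr rfl fun _ _ => Finset.sum_congr rfl fun _ _ => by ring)

theorem pay_add_pay_swap (R1 : A → B → ℝ) (R2 : B → A → ℝ) (μ : A → ℝ) (ν : B → ℝ) :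
    pay R1 μ ν + pay R2 ν μ = pay (fun a b => R1 a b + R2 b a) μ ν := by
  simp only [pay]
  rw [Finset.sum_comm (f := fun b a => ν b * R2 b a * μ a), ← Finset.sum_add_distrib]
  refine Finset.sum_congr rfl fun a _ => ?_
  rw [← Finset.sum_add_distrib]
  exact Finset.sum_congr rfl fun b _ => by ring

theorem entropy_eq_sum_negMulLog (μ : A → ℝ) : entropy μ = ∑ a, Real.negMulLog (μ a) := by
  simp only [entropy, Real.negMulLog, neg_mul, Finset.sum_neg_distrib]

theorem continuous_entropy : Continuous (entropy (A := A)) := by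
  simp only [funext entropy_eq_sum_negMulLog]
  fun_prop

theorem concaveOn_entropy : ConcaveOn ℝ (stdSimplex ℝ A) (entropy (A := A)) := by
  refine ⟨convex_stdSimplex ℝ A, fun μ hμ μ' hμ' s t hs ht hst => ?_⟩
  simp only [smul_eq_mul, entropy_eq_sum_negMulLog, Finset.mul_sum, ← Finset.sum_add_distrib]
  refine Finset.sum_le_sum fun a _ => ?_
  simpa using Real.concaveOn_negMulLog.2 (mem_Ici.2 (hμ.1 a)) (mem_Ici.2 (hμ'.1 a)) hs ht hst

variable (τ1 τ2 : ℝ)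

noncomputable def regPay (R : A → B → ℝ) (μ : A → ℝ) (ν : B → ℝ) : ℝ :=
  pay R μ ν + τ1 * entropy μ - τ2 * entropy ν

theorem regPay_add_regPay_swap (R1 : A → B → ℝ) (R2 : B → A → ℝ) (μ : A → ℝ) (ν : B → ℝ) :
    regPay τ1 τ2 R1 μ ν + regPay τ2 τ1 R2 ν μ = pay (fun a b => R1 a b + R2 b a) μ ν := by
  rw [← pay_add_pay_swap]
  simp only [regPay]
  ring

variable {τ1 τ2} {R : A → B → ℝ}

theorem continuous_regPay_left (ν : B → ℝ) : Continuous fun μ => regPay τ1 τ2 R μ ν :=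
  (((payBilin R).flip ν).continuous_of_finiteDimensional.add
    (continuous_const.mul continuous_entropy)).sub continuous_const

theorem continuous_regPay_right (μ : A → ℝ) : Continuous (regPay τ1 τ2 R μ) :=
  ((payBilin R μ).continuous_of_finiteDimensional.add
    continuous_const).sub (continuous_const.mul continuous_entropy)

theorem concaveOn_regPay_left (hτ1 : 0 ≤ τ1) (ν : B → ℝ) :
    ConcaveOn ℝ (stdSimplex ℝ A) fun μ => regPay τ1 τ2 R μ ν :=
  ((LinearMap.concaveOn ((payBilin R).flip ν) (convex_stdSimplex ℝ A)).add
    (concaveOn_entropy.smul hτ1)).sub (convexOn_const (τ2 * entropy ν) (convex_stdSimplex ℝ A))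

theorem convexOn_regPay_right (hτ2 : 0 ≤ τ2) (μ : A → ℝ) :
    ConvexOn ℝ (stdSimplex ℝ B) (regPay τ1 τ2 R μ) :=
  ((LinearMap.convexOn (payBilin R μ) (convex_stdSimplex ℝ B)).add
    (convexOn_const (τ1 * entropy μ) (convex_stdSimplex ℝ B))).sub (concaveOn_entropy.smul hτ2)

theorem bddBelow_range_regPay (μ : A → ℝ) :
    BddBelow (range fun ν : stdSimplex ℝ B => regPay τ1 τ2 R μ ν) :=
  (isCompact_range ((continuous_regPay_right μ).comp continuous_subtype_val)).bddBelow

variable [Nonempty A] [Nonempty B]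

theorem regVal_eq_ciSup_ciInf_regPay :
    regVal τ1 τ2 R = ⨆ μ : stdSimplex ℝ A, ⨅ ν : stdSimplex ℝ B, regPay τ1 τ2 R μ ν :=
  rfl

theorem exists_saddlePoint_regPay (hτ1 : 0 ≤ τ1) (hτ2 : 0 ≤ τ2) :
    ∃ (a : stdSimplex ℝ A) (b : stdSimplex ℝ B),
      ∀ (μ : stdSimplex ℝ A) (ν : stdSimplex ℝ B), regPay τ1 τ2 R μ b ≤ regPay τ1 τ2 R a ν := by
  obtain ⟨b, hb, a, ha, hab⟩ := Sion.exists_isSaddlePointOn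
    (f := fun ν μ => regPay τ1 τ2 R μ ν)
    (Set.nonempty_coe_sort.1 inferInstance) (convex_stdSimplex ℝ B) (isCompact_stdSimplex ℝ B)
    (fun μ _ => (continuous_regPay_right μ).continuousOn.lowerSemicontinuousOn)
    (fun μ _ => (convexOn_regPay_right (τ1 := τ1) (R := R) hτ2 μ).quasiconvexOn)
    (convex_stdSimplex ℝ A) (Set.nonempty_coe_sort.1 inferInstance) (isCompact_stdSimplex ℝ A)
    (fun ν _ => (continuous_regPay_left ν).continuousOn.upperSemicontinuousOn)
    (fun ν _ => (concaveOn_regPay_left (τ2 := τ2) (R := R) hτ1 ν).quasiconcaveOn)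
  exact ⟨⟨a, ha⟩, ⟨b, hb⟩, fun μ ν => hab ν ν.2 μ μ.2⟩

theorem abs_le_matMaxNorm (M : A → B → ℝ) (a : A) (b : B) : |M a b| ≤ matMaxNorm M :=
  Finset.le_sup' (fun ab : A × B => |M ab.1 ab.2|) (Finset.mem_univ (a, b))

theorem matMaxNorm_nonneg (M : A → B → ℝ) : 0 ≤ matMaxNorm M :=
  (abs_nonneg _).trans (abs_le_matMaxNorm M (Classical.arbitrary A) (Classical.arbitrary B))

theorem eq_zero_of_matMaxNorm_eq_zero {M : A → B → ℝ} (h : matMaxNorm M = 0) (a : A) (b : B) :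
    M a b = 0 :=
  abs_eq_zero.1 (le_antisymm (h ▸ abs_le_matMaxNorm M a b) (abs_nonneg _))

theorem pay_le_matMaxNorm (M : A → B → ℝ) {μ : A → ℝ} {ν : B → ℝ}
    (hμ : μ ∈ stdSimplex ℝ A) (hν : ν ∈ stdSimplex ℝ B) : pay M μ ν ≤ matMaxNorm M :=
  calc pay M μ ν ≤ ∑ a, ∑ b, μ a * matMaxNorm M * ν b := by
        refine Finset.sum_le_sum fun a _ => Finset.sum_le_sum fun b _ => ?_
        have hM := (le_abs_self (M a b)).trans (abs_le_matMaxNorm M a b)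
        exact mul_le_mul_of_nonneg_right (mul_le_mul_of_nonneg_left hM (hμ.1 a)) (hν.1 b)
    _ = matMaxNorm M := by
        simp only [← Finset.mul_sum, hν.2, mul_one, ← Finset.sum_mul, hμ.2, one_mul]

variable (τ1 τ2)

theorem regVal_add_regVal_le_matMaxNorm (R1 : A → B → ℝ) (R2 : B → A → ℝ) :
    regVal τ1 τ2 R1 + regVal τ2 τ1 R2 ≤ matMaxNorm (fun a b => R1 a b + R2 b a) := by
  rw [regVal_eq_ciSup_ciInf_regPay, regVal_eq_ciSup_ciInf_regPay]
  exact ciSup_ciInf_add_ciSup_ciInf_le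
    (f := fun (μ : stdSimplex ℝ A) (ν : stdSimplex ℝ B) => regPay τ1 τ2 R1 μ ν)
    (g := fun ν μ => regPay τ2 τ1 R2 ν μ)
    (fun μ => bddBelow_range_regPay μ) (fun ν => bddBelow_range_regPay ν) fun μ ν =>
      (regPay_add_regPay_swap τ1 τ2 R1 R2 μ ν).trans_le (pay_le_matMaxNorm _ μ.2 ν.2)

variable {τ1 τ2}

theorem regVal_add_regVal_nonneg_of_zero_sum (hτ1 : 0 ≤ τ1) (hτ2 : 0 ≤ τ2) {R1 : A → B → ℝ}
    {R2 : B → A → ℝ} (h : ∀ a b, R1 a b + R2 b a = 0) :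
    0 ≤ regVal τ1 τ2 R1 + regVal τ2 τ1 R2 := by
  have hneg (μ : A → ℝ) (ν : B → ℝ) : regPay τ2 τ1 R2 ν μ = -regPay τ1 τ2 R1 μ ν := by
    have hsum := regPay_add_regPay_swap τ1 τ2 R1 R2 μ ν
    simp only [h, pay, mul_zero, zero_mul, Finset.sum_const_zero] at hsum
    linarith
  obtain ⟨a, b, hab⟩ := exists_saddlePoint_regPay (R := R1) hτ1 hτ2
  have h1 : regPay τ1 τ2 R1 a b ≤ regVal τ1 τ2 R1 := by
    rw [regVal_eq_ciSup_ciInf_regPay]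
    exact le_ciSup_ciInf_of_saddle
      (f := fun (μ : stdSimplex ℝ A) (ν : stdSimplex ℝ B) => regPay τ1 τ2 R1 μ ν)
      (fun μ => bddBelow_range_regPay μ) hab
  have h2 : regPay τ2 τ1 R2 b a ≤ regVal τ2 τ1 R2 := by
    rw [regVal_eq_ciSup_ciInf_regPay]
    exact le_ciSup_ciInf_of_saddle
      (f := fun (ν : stdSimplex ℝ B) (μ : stdSimplex ℝ A) => regPay τ2 τ1 R2 ν μ)
      (fun ν => bddBelow_range_regPay ν) fun ν μ => by
        rw [hneg, hneg]
        exact neg_le_neg (hab μ ν)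
  linarith [hneg a b]

end Game

theorem stmt_9 {A1 A2 : Type*} [Fintype A1] [Fintype A2] [Nonempty A1] [Nonempty A2]
    (R1 : A1 → A2 → ℝ) (R2 : A2 → A1 → ℝ) (τ1 τ2 : ℝ) (hτ1 : 0 ≤ τ1) (hτ2 : 0 ≤ τ2)
    (lam : ℝ) (hlam : 1 < lam)
    (c : ℝ)
    (hc : c = lam * matMaxNorm (fun a b => R1 a b + R2 b a)
        - (regVal τ1 τ2 R1 + regVal τ2 τ1 R2)) :
    ((lam - 1) * matMaxNorm (fun a b => R1 a b + R2 b a) ≤ c ∧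
      0 ≤ (lam - 1) * matMaxNorm (fun a b => R1 a b + R2 b a)) ∧
    (c = 0 ↔ matMaxNorm (fun a b => R1 a b + R2 b a) = 0) := by
  set N := matMaxNorm (fun a b => R1 a b + R2 b a)
  have hN : 0 ≤ N := matMaxNorm_nonneg _
  have hdual : regVal τ1 τ2 R1 + regVal τ2 τ1 R2 ≤ N := regVal_add_regVal_le_matMaxNorm τ1 τ2 R1 R2
  have hgap : (lam - 1) * N ≤ c := by rw [hc]; linarith
  refine ⟨⟨hgap, mul_nonneg (by linarith) hN⟩, fun hc0 => ?_, fun hN0 => ?_⟩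
  · exact le_antisymm (by nlinarith) hN
  · have hval := regVal_add_regVal_nonneg_of_zero_sum hτ1 hτ2 (eq_zero_of_matMaxNorm_eq_zero hN0)
    rw [hc, hN0]
    linarith
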